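/- arXiv:2305.14258 — 3 statements merged into one kernel-verified Lean document; each statement's English description precedes it below -/
import Mathlib

section
/- (Unified formulation.) Let p_P and p_N be probability measures on X, let θ_A, θ_B ∈ [0,1], and let p_A = θ_A·p_P + (1−θ_A)·p_N and p_B = θ_B·p_P + (1−θ_B)·p_N. Assume f : X → ℝ is measurable and the pushforward distributions of f under p_P and under p_N are both atomless. Then the contaminated 0–1 AUC risk R_AB(f) = R(f; p_A, p_B) satisfies R_AB(f) = a·R_PN(f) + (1 − a)/2, where a = θ_A − θ_B. -/
open MeasureTheory

/-- The AUC risk of score function `f` under the 0–1 loss, with positive distribution `μ`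
and negative distribution `ν`: `R(f; μ, ν) = ∫∫ 𝟙[f(x) − f(x') < 0] dμ(x) dν(x')`. -/
noncomputable def AUCRisk {X : Type*} [MeasurableSpace X] (f : X → ℝ)
    (μ ν : Measure X) : ℝ :=
  ∫ x, ∫ x', (if f x - f x' < 0 then (1 : ℝ) else 0) ∂ν ∂μ

/-! `R(f; μ, ν)` is the `μ ⊗ ν`-measure of `{f x < f x'}`, which is bilinear in `(μ, ν)`. When
`f` has no atoms under `ν`, ties have `μ ⊗ ν`-measure zero, so `R(f; μ, ν) + R(f; ν, μ) = 1` and in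
particular `R(f; μ, μ) = 1/2`. Expanding `R(f; θ_A p_P + (1 - θ_A) p_N, θ_B p_P + (1 - θ_B) p_N)`
into four terms and using these two identities gives the affine formula. -/

open scoped ENNReal

section

variable {X : Type*} [MeasurableSpace X]

instance isFiniteMeasure_ofReal_smul (μ : Measure X) [IsFiniteMeasure μ] (r : ℝ) :
    IsFiniteMeasure (ENNReal.ofReal r • μ) :=
  μ.smul_finite ENNReal.ofReal_ne_top

theorem measure_prod_setOf_comp_eq_eq_zero {f : X → ℝ} (hf : Measurable f) (μ ν : Measure X)
    [SFinite ν] (hν : ∀ t, ν {x | f x = t} = 0) :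
    (μ.prod ν) {p | f p.1 = f p.2} = 0 := by
  have hS : MeasurableSet {p : X × X | f p.1 = f p.2} :=
    measurableSet_eq_fun (hf.comp measurable_fst) (hf.comp measurable_snd)
  have hslice (x : X) : ν (Prod.mk x ⁻¹' {p | f p.1 = f p.2}) = 0 := by
    simpa [Set.preimage, eq_comm] using hν (f x)
  rw [Measure.prod_apply hS]
  simp only [hslice, lintegral_zero]

namespace AUCRisk

variable {f : X → ℝ}

theorem eq_measureReal_prod (hf : Measurable f) (μ ν : Measure X) [SFinite μ]
    [IsFiniteMeasure ν] :
    AUCRisk f μ ν = (μ.prod ν).real {p | f p.1 < f p.2} := by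
  have hS : MeasurableSet {p : X × X | f p.1 < f p.2} :=
    measurableSet_lt (hf.comp measurable_fst) (hf.comp measurable_snd)
  rw [measureReal_def, Measure.prod_apply hS, ← integral_toReal
    (measurable_measure_prodMk_left hS).aemeasurable (ae_of_all _ fun _ ↦ measure_lt_top _ _)]
  refine integral_congr_ae (ae_of_all _ fun x ↦ ?_)
  dsimp only
  rw [← measureReal_def, ← integral_indicator_one (measurable_prodMk_left hS)]
  congr 1 with x'
  simp [Set.indicator_apply, sub_neg]

theorem add_left (hf : Measurable f) (μ₁ μ₂ ν : Measure X) [IsFiniteMeasure μ₁]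
    [IsFiniteMeasure μ₂] [IsFiniteMeasure ν] :
    AUCRisk f (μ₁ + μ₂) ν = AUCRisk f μ₁ ν + AUCRisk f μ₂ ν := by
  simp only [eq_measureReal_prod hf, Measure.add_prod]
  exact measureReal_add_apply

theorem add_right (hf : Measurable f) (μ ν₁ ν₂ : Measure X) [IsFiniteMeasure μ]
    [IsFiniteMeasure ν₁] [IsFiniteMeasure ν₂] :
    AUCRisk f μ (ν₁ + ν₂) = AUCRisk f μ ν₁ + AUCRisk f μ ν₂ := by
  simp only [eq_measureReal_prod hf, Measure.prod_add]
  exact measureReal_add_apply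

theorem smul_left (hf : Measurable f) (c : ℝ≥0∞) (μ ν : Measure X) [SFinite μ]
    [IsFiniteMeasure ν] :
    AUCRisk f (c • μ) ν = c.toReal * AUCRisk f μ ν := by
  simp only [eq_measureReal_prod hf, Measure.prod_smul_left, measureReal_ennreal_smul_apply]

theorem smul_right (hf : Measurable f) {c : ℝ≥0∞} (hc : c ≠ ∞) (μ ν : Measure X) [SFinite μ]
    [IsFiniteMeasure ν] :
    AUCRisk f μ (c • ν) = c.toReal * AUCRisk f μ ν := by
  have := ν.smul_finite hc
  simp only [eq_measureReal_prod hf, Measure.prod_smul_right, measureReal_ennreal_smul_apply]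

theorem add_swap (hf : Measurable f) (μ ν : Measure X) [IsProbabilityMeasure μ]
    [IsProbabilityMeasure ν] (hν : ∀ t, ν {x | f x = t} = 0) :
    AUCRisk f μ ν + AUCRisk f ν μ = 1 := by
  have hlt : MeasurableSet {p : X × X | f p.1 < f p.2} :=
    measurableSet_lt (hf.comp measurable_fst) (hf.comp measurable_snd)
  have hgt : MeasurableSet {p : X × X | f p.2 < f p.1} :=
    measurableSet_lt (hf.comp measurable_snd) (hf.comp measurable_fst)
  have heq : MeasurableSet {p : X × X | f p.1 = f p.2} :=
    measurableSet_eq_fun (hf.comp measurable_fst) (hf.comp measurable_snd)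
  have hswap : AUCRisk f ν μ = (μ.prod ν).real {p | f p.2 < f p.1} := by
    rw [eq_measureReal_prod hf, ← Measure.prod_swap, map_measureReal_apply measurable_swap hlt]
    rfl
  have hdisj : Disjoint {p : X × X | f p.1 < f p.2} {p | f p.2 < f p.1} :=
    Set.disjoint_left.2 fun _ h₁ h₂ ↦ lt_asymm (α := ℝ) h₁ h₂
  have hties : {p : X × X | f p.1 < f p.2} ∪ {p | f p.2 < f p.1} = {p | f p.1 = f p.2}ᶜ := by
    ext p
    simp [eq_comm (a := f p.1)]
  rw [eq_measureReal_prod hf, hswap, ← measureReal_union hdisj hgt, hties,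
    probReal_compl_eq_one_sub heq, measureReal_def, measure_prod_setOf_comp_eq_eq_zero hf μ ν hν,
    ENNReal.toReal_zero, sub_zero]

theorem self_eq_half (hf : Measurable f) (μ : Measure X) [IsProbabilityMeasure μ]
    (hμ : ∀ t, μ {x | f x = t} = 0) :
    AUCRisk f μ μ = 1 / 2 := by
  linarith [add_swap hf μ μ hμ]

end AUCRisk

end

/-- unified formulation: the contaminated 0–1 AUC risk satisfies
`R_AB(f) = a·R_PN(f) + (1 − a)/2` with `a = θ_A − θ_B`. -/
theorem contaminated_auc_risk_affine {X : Type*} [MeasurableSpace X]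
    (pP pN : Measure X) [IsProbabilityMeasure pP] [IsProbabilityMeasure pN]
    (θA θB : ℝ) (hθA : θA ∈ Set.Icc (0 : ℝ) 1) (hθB : θB ∈ Set.Icc (0 : ℝ) 1)
    (f : X → ℝ) (hf : Measurable f)
    (hP : ∀ t : ℝ, pP {x | f x = t} = 0)
    (hN : ∀ t : ℝ, pN {x | f x = t} = 0)
    (pA pB : Measure X)
    (hpA : pA = ENNReal.ofReal θA • pP + ENNReal.ofReal (1 - θA) • pN)
    (hpB : pB = ENNReal.ofReal θB • pP + ENNReal.ofReal (1 - θB) • pN) :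
    AUCRisk f pA pB
      = (θA - θB) * AUCRisk f pP pN + (1 - (θA - θB)) / 2 := by
  subst hpA hpB
  simp only [AUCRisk.add_left hf, AUCRisk.add_right hf, AUCRisk.smul_left hf,
    AUCRisk.smul_right hf ENNReal.ofReal_ne_top, AUCRisk.self_eq_half hf _ hP,
    AUCRisk.self_eq_half hf _ hN, ENNReal.toReal_ofReal hθA.1, ENNReal.toReal_ofReal hθB.1,
    ENNReal.toReal_ofReal (sub_nonneg.2 hθA.2), ENNReal.toReal_ofReal (sub_nonneg.2 hθB.2)]
  linear_combination (1 - θA) * θB * AUCRisk.add_swap hf pP pN hN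
end

section
/- (Consistency of the inaccurate case.) Let p_P and p_N be probability measures on X, let θ_A, θ_B ∈ [0,1] with θ_A > θ_B, and let p_A = θ_A·p_P + (1−θ_A)·p_N and p_B = θ_B·p_P + (1−θ_B)·p_N. Let F be a set of measurable score functions such that for every f ∈ F the pushforward distributions of f under p_P and under p_N are atomless. If f* ∈ F minimizes the contaminated risk R_AB over F, i.e., R(f*; p_A, p_B) ≤ R(f; p_A, p_B) for all f ∈ F, then f* also minimizes the true AUC risk over F: R_PN(f*) ≤ R_PN(f) for all f ∈ F. -/
/-!
The 0–1 AUC risk is bilinear in the pair of measures. When score ties have probability zero,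
`R(f; μ, μ) = 1/2` and `R(f; ν, μ) = 1 - R(f; μ, ν)`, so expanding the mixtures gives
`R(f; p_A, p_B) = c + (θ_A - θ_B) R_PN(f)` with `c` independent of `f`. As `θ_A > θ_B`, the
contaminated risk is a strictly increasing function of the true risk and has the same minimizers.
-/

open MeasureTheory
open scoped ENNReal

section AUCRiskLemmas

variable {X : Type*} [MeasurableSpace X] {f : X → ℝ}

lemma AUCRisk_smul_left (c : ℝ≥0∞) (μ ν : Measure X) :
    AUCRisk f (c • μ) ν = c.toReal * AUCRisk f μ ν :=
  integral_smul_measure _ c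

lemma AUCRisk_smul_right (c : ℝ≥0∞) (μ ν : Measure X) :
    AUCRisk f μ (c • ν) = c.toReal * AUCRisk f μ ν := by
  simp only [AUCRisk, integral_smul_measure, smul_eq_mul, integral_const_mul]

lemma measurableSet_lt_comp_fst_snd (hf : Measurable f) :
    MeasurableSet {p : X × X | f p.1 < f p.2} :=
  measurableSet_lt (hf.comp measurable_fst) (hf.comp measurable_snd)

lemma AUCRisk_eq_measureReal_prod (hf : Measurable f) (μ ν : Measure X)
    [IsFiniteMeasure μ] [IsFiniteMeasure ν] :
    AUCRisk f μ ν = (μ.prod ν).real {p | f p.1 < f p.2} := by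
  have hS := measurableSet_lt_comp_fst_snd hf
  rw [← integral_indicator_one hS, integral_prod _ ((integrable_const 1).indicator hS)]
  unfold AUCRisk
  congr! with x x'
  simp [Set.indicator, sub_neg]

lemma AUCRisk_add_left (hf : Measurable f) (μ μ' ν : Measure X)
    [IsFiniteMeasure μ] [IsFiniteMeasure μ'] [IsFiniteMeasure ν] :
    AUCRisk f (μ + μ') ν = AUCRisk f μ ν + AUCRisk f μ' ν := by
  rw [AUCRisk_eq_measureReal_prod hf, AUCRisk_eq_measureReal_prod hf,
    AUCRisk_eq_measureReal_prod hf, Measure.add_prod, measureReal_add_apply]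

lemma AUCRisk_add_right (hf : Measurable f) (μ ν ν' : Measure X)
    [IsFiniteMeasure μ] [IsFiniteMeasure ν] [IsFiniteMeasure ν'] :
    AUCRisk f μ (ν + ν') = AUCRisk f μ ν + AUCRisk f μ ν' := by
  rw [AUCRisk_eq_measureReal_prod hf, AUCRisk_eq_measureReal_prod hf,
    AUCRisk_eq_measureReal_prod hf, Measure.prod_add, measureReal_add_apply]

lemma measurableSet_eq_comp_fst_snd (hf : Measurable f) :
    MeasurableSet {p : X × X | f p.1 = f p.2} :=
  measurableSet_eq_fun (hf.comp measurable_fst) (hf.comp measurable_snd)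

lemma measure_prod_ties_eq_zero (hf : Measurable f) (μ ν : Measure X) [SFinite ν]
    (hν : ∀ t, ν {x | f x = t} = 0) :
    (μ.prod ν) {p | f p.1 = f p.2} = 0 := by
  rw [Measure.measure_prod_null (measurableSet_eq_comp_fst_snd hf)]
  refine Filter.Eventually.of_forall fun x => ?_
  simpa [Set.preimage, eq_comm] using hν (f x)

lemma AUCRisk_add_AUCRisk_swap (hf : Measurable f) (μ ν : Measure X)
    [IsProbabilityMeasure μ] [IsProbabilityMeasure ν] (hν : ∀ t, ν {x | f x = t} = 0) :
    AUCRisk f μ ν + AUCRisk f ν μ = 1 := by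
  have hS' : MeasurableSet {p : X × X | f p.2 < f p.1} :=
    measurableSet_lt (hf.comp measurable_snd) (hf.comp measurable_fst)
  have hswap : (ν.prod μ).real {p | f p.1 < f p.2} = (μ.prod ν).real {p | f p.2 < f p.1} := by
    rw [← Measure.prod_swap, map_measureReal_apply measurable_swap
      (measurableSet_lt_comp_fst_snd hf)]
    rfl
  have hunion : {p : X × X | f p.1 < f p.2} ∪ {p | f p.2 < f p.1} = {p | f p.1 = f p.2}ᶜ := by
    ext p
    simp [lt_or_lt_iff_ne]
  have hdisj : Disjoint {p : X × X | f p.1 < f p.2} {p | f p.2 < f p.1} :=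
    Set.disjoint_left.2 fun _ h h' ↦ lt_asymm (a := f _) h h'
  rw [AUCRisk_eq_measureReal_prod hf, AUCRisk_eq_measureReal_prod hf, hswap,
    ← measureReal_union hdisj hS', hunion, measureReal_compl (measurableSet_eq_comp_fst_snd hf)]
  simp [measureReal_def, measure_prod_ties_eq_zero hf μ ν hν]

lemma AUCRisk_self (hf : Measurable f) (μ : Measure X) [IsProbabilityMeasure μ]
    (hμ : ∀ t, μ {x | f x = t} = 0) :
    AUCRisk f μ μ = 1 / 2 := by
  linarith [AUCRisk_add_AUCRisk_swap hf μ μ hμ]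

end AUCRiskLemmas

lemma AUCRisk_mixture {X : Type*} [MeasurableSpace X] {f : X → ℝ} (hf : Measurable f)
    (μ ν : Measure X) [IsProbabilityMeasure μ] [IsProbabilityMeasure ν]
    (hμ : ∀ t, μ {x | f x = t} = 0) (hν : ∀ t, ν {x | f x = t} = 0)
    {a b : ℝ} (ha : a ∈ Set.Icc (0 : ℝ) 1) (hb : b ∈ Set.Icc (0 : ℝ) 1) :
    AUCRisk f (ENNReal.ofReal a • μ + ENNReal.ofReal (1 - a) • ν)
        (ENNReal.ofReal b • μ + ENNReal.ofReal (1 - b) • ν) =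
      (a * b + (1 - a) * (1 - b)) / 2 + (1 - a) * b + (a - b) * AUCRisk f μ ν := by
  have hfinite_smul : ∀ (c : ℝ) (ρ : Measure X) [IsFiniteMeasure ρ],
      IsFiniteMeasure (ENNReal.ofReal c • ρ) := fun _ ρ _ ↦ ρ.smul_finite ENNReal.ofReal_ne_top
  have hsymm := AUCRisk_add_AUCRisk_swap hf μ ν hν
  simp only [AUCRisk_add_left hf, AUCRisk_add_right hf, AUCRisk_smul_left, AUCRisk_smul_right,
    AUCRisk_self hf μ hμ, AUCRisk_self hf ν hν, ENNReal.toReal_ofReal ha.1,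
    ENNReal.toReal_ofReal hb.1, ENNReal.toReal_ofReal (sub_nonneg.2 ha.2),
    ENNReal.toReal_ofReal (sub_nonneg.2 hb.2)]
  linear_combination (1 - a) * b * hsymm

/-- consistency of the inaccurate case: a minimizer of the contaminated
0–1 AUC risk `R_AB` over a family `F` is also a minimizer of the true risk `R_PN`. -/
theorem contaminated_auc_minimizer_consistent {X : Type*} [MeasurableSpace X]
    (pP pN : Measure X) [IsProbabilityMeasure pP] [IsProbabilityMeasure pN]
    (θA θB : ℝ) (hθA : θA ∈ Set.Icc (0 : ℝ) 1) (hθB : θB ∈ Set.Icc (0 : ℝ) 1)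
    (hab : θB < θA)
    (F : Set (X → ℝ))
    (hmeas : ∀ f ∈ F, Measurable f)
    (hP : ∀ f ∈ F, ∀ t : ℝ, pP {x | f x = t} = 0)
    (hN : ∀ f ∈ F, ∀ t : ℝ, pN {x | f x = t} = 0)
    (pA pB : Measure X)
    (hpA : pA = ENNReal.ofReal θA • pP + ENNReal.ofReal (1 - θA) • pN)
    (hpB : pB = ENNReal.ofReal θB • pP + ENNReal.ofReal (1 - θB) • pN)
    (fstar : X → ℝ) (hstar : fstar ∈ F)
    (hmin : ∀ f ∈ F, AUCRisk fstar pA pB ≤ AUCRisk f pA pB) :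
    ∀ f ∈ F, AUCRisk fstar pP pN ≤ AUCRisk f pP pN := by
  intro f hf
  have hmin_f := hmin f hf
  rw [hpA, hpB, AUCRisk_mixture (hmeas fstar hstar) pP pN (hP fstar hstar) (hN fstar hstar)
    hθA hθB, AUCRisk_mixture (hmeas f hf) pP pN (hP f hf) (hN f hf) hθA hθB] at hmin_f
  exact le_of_mul_le_mul_left (by linarith) (sub_pos.2 hab)
end

section
/- (rpAUC risk equals the trimmed AUC risk; small-loss equivalence.) Let X_A and X_B be nonempty finite sets of points of X, let f : X → ℝ be injective on X_A and on X_B, and let ℓ : ℝ → ℝ be monotonically nonincreasing. Fix α, β ∈ [0,1), and let X_A^+ ⊆ X_A be the subset of the ⌊(1−β)·|X_A|⌋ elements of X_A with the largest values of f, and X_B^− ⊆ X_B the subset of the ⌊(1−α)·|X_B|⌋ elements of X_B with the smallest values of f. Define the instance loss L(x) = (1/|X_B|)·Σ_{x' ∈ X_B} ℓ(f(x) − f(x')) for x ∈ X_A and L(x') = (1/|X_A|)·Σ_{x ∈ X_A} ℓ(f(x) − f(x')) for x' ∈ X_B. Then X_A^+ minimizes the total instance loss Σ_{x ∈ S} L(x)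 among all subsets S ⊆ X_A of size ⌊(1−β)·|X_A|⌋, and X_B^− minimizes Σ_{x' ∈ S'} L(x') among all subsets S' ⊆ X_B of size ⌊(1−α)·|X_B|⌋; consequently, the empirical rpAUC risk R̂^(rp)(f; α, β) = (1/(|X_A^+|·|X_B^−|))·Σ_{x ∈ X_A^+} Σ_{x' ∈ X_B^−} ℓ(f(x) − f(x')) equals the full empirical pairwise AUC risk computed after removing from X_A a set of ⌈β·|X_A|⌉-many instances of maximal total instance loss and from X_B a set of ⌈α·|X_B|⌉-many instances of maximal total instance loss. -/
/-!
Since `ℓ` is nonincreasing, the instance loss of `x ∈ X_A` decreases with `f x` and that of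
`x' ∈ X_B` increases with `f x'`. Hence every element of `X_A⁺` has no larger loss than any
element of `X_A \ X_A⁺`, and an exchange argument shows that `X_A⁺` minimizes the total loss
among subsets of its size; dually for `X_B⁻`. Complements of minimizers are maximizers among
subsets of the complementary size, and `|X_A| - ⌊(1 - β)|X_A|⌋ = ⌈β|X_A|⌉`, so removing the
maximal-loss set `X_A \ X_A⁺` leaves exactly `X_A⁺` (and likewise for `X_B`).
-/

/-- Empirical pairwise AUC risk of score `f` with loss `ℓ` over the finite sets
`S` (positives) and `S'` (negatives). -/
noncomputable def pairAUCRisk {X : Type*} (ℓ : ℝ → ℝ) (f : X → ℝ)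
    (S S' : Finset X) : ℝ :=
  (1 / ((S.card : ℝ) * (S'.card : ℝ))) * ∑ x ∈ S, ∑ x' ∈ S', ℓ (f x - f x')

/-- Instance loss of `x ∈ X_A` against the full set `X_B`. -/
noncomputable def instanceLossA {X : Type*} (ℓ : ℝ → ℝ) (f : X → ℝ)
    (XB : Finset X) (x : X) : ℝ :=
  (1 / (XB.card : ℝ)) * ∑ x' ∈ XB, ℓ (f x - f x')

/-- Instance loss of `x' ∈ X_B` against the full set `X_A`. -/
noncomputable def instanceLossB {X : Type*} (ℓ : ℝ → ℝ) (f : X → ℝ)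
    (XA : Finset X) (x' : X) : ℝ :=
  (1 / (XA.card : ℝ)) * ∑ x ∈ XA, ℓ (f x - f x')


namespace Finset

variable {ι M : Type*}

theorem sum_le_sum_of_card_eq_of_forall_le [AddCommMonoid M] [PartialOrder M]
    [IsOrderedAddMonoid M] {s t : Finset ι} {h : ι → M} (hcard : s.card = t.card)
    (hle : ∀ x ∈ s, ∀ y ∈ t, h x ≤ h y) : ∑ x ∈ s, h x ≤ ∑ y ∈ t, h y := by
  let e : s ≃ t := equivOfCardEq hcard
  calc ∑ x ∈ s, h x = ∑ x : s, h x := (sum_coe_sort s h).symm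
    _ ≤ ∑ x : s, h (e x) := sum_le_sum fun x _ => hle x x.2 (e x) (e x).2
    _ = ∑ y : t, h y := e.sum_comp (fun y : t => h y)
    _ = ∑ y ∈ t, h y := sum_coe_sort t h

/-- Exchange argument: `s \ t` and `t \ s` have the same size, and every element of the
first is dominated by every element of the second. -/
theorem sum_le_sum_of_forall_le_sdiff [DecidableEq ι] [AddCommMonoid M] [PartialOrder M]
    [IsOrderedAddMonoid M] {s t u : Finset ι} {h : ι → M} (ht : t ⊆ u)
    (hcard : s.card = t.card) (hle : ∀ x ∈ s, ∀ y ∈ u \ s, h x ≤ h y) :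
    ∑ x ∈ s, h x ≤ ∑ x ∈ t, h x := by
  have hcard' : (s \ t).card = (t \ s).card := by
    have := card_sdiff_add_card_inter s t
    have := card_sdiff_add_card_inter t s
    rw [inter_comm] at this
    omega
  have hexch : ∑ x ∈ s \ t, h x ≤ ∑ y ∈ t \ s, h y :=
    sum_le_sum_of_card_eq_of_forall_le hcard' fun x hx y hy =>
      hle x (mem_sdiff.1 hx).1 y (mem_sdiff.2 ⟨ht (mem_sdiff.1 hy).1, (mem_sdiff.1 hy).2⟩)
  rw [← sum_inter_add_sum_sdiff s t, ← sum_inter_add_sum_sdiff t s, inter_comm]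
  exact add_le_add le_rfl hexch

theorem sum_le_sum_sdiff_of_forall_le_sdiff [DecidableEq ι] [AddCommGroup M] [PartialOrder M]
    [IsOrderedAddMonoid M] {s t u : Finset ι} {h : ι → M} (hs : s ⊆ u) (ht : t ⊆ u)
    (hcard : t.card = (u \ s).card) (hle : ∀ x ∈ s, ∀ y ∈ u \ s, h x ≤ h y) :
    ∑ x ∈ t, h x ≤ ∑ x ∈ u \ s, h x := by
  have hcard' : s.card = (u \ t).card := by
    rw [card_sdiff_of_subset ht, hcard, card_sdiff_of_subset hs]
    have := card_le_card hs
    omega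
  have hmin := sum_le_sum_of_forall_le_sdiff sdiff_subset hcard' hle
  rw [sum_sdiff_eq_sub hs, le_sub_iff_add_le]
  rw [sum_sdiff_eq_sub ht] at hmin
  rwa [le_sub_iff_add_le, add_comm] at hmin

end Finset

theorem Nat.sub_floor_one_sub_mul {r : ℝ} (n : ℕ) (h0 : 0 ≤ r) (h1 : r ≤ 1) :
    n - ⌊(1 - r) * n⌋₊ = ⌈r * n⌉₊ := by
  have hn : (0 : ℝ) ≤ n := n.cast_nonneg
  have hceil : ⌈r * n⌉₊ ≤ n := Nat.ceil_le.2 (by nlinarith)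
  have hfloor : ⌊(1 - r) * n⌋₊ = n - ⌈r * n⌉₊ := by
    rw [Nat.floor_eq_iff (by nlinarith), Nat.cast_sub hceil]
    constructor
    · nlinarith [Nat.le_ceil (r * n)]
    · nlinarith [Nat.ceil_lt_add_one (by positivity : (0 : ℝ) ≤ r * n)]
  omega

section InstanceLoss

variable {X : Type*} {ℓ : ℝ → ℝ} {f : X → ℝ}

theorem instanceLossA_le_of_le (hℓ : Antitone ℓ) (XB : Finset X) {x y : X} (hxy : f x ≤ f y) :
    instanceLossA ℓ f XB y ≤ instanceLossA ℓ f XB x :=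
  mul_le_mul_of_nonneg_left
    (Finset.sum_le_sum fun _ _ => hℓ (sub_le_sub_right hxy _)) (by positivity)

theorem instanceLossB_le_of_le (hℓ : Antitone ℓ) (XA : Finset X) {x y : X} (hxy : f x ≤ f y) :
    instanceLossB ℓ f XA x ≤ instanceLossB ℓ f XA y :=
  mul_le_mul_of_nonneg_left
    (Finset.sum_le_sum fun _ _ => hℓ (sub_le_sub_left hxy _)) (by positivity)

end InstanceLoss

theorem rpauc_eq_trimmed_auc_general {X : Type*} [DecidableEq X]
    (XA XB : Finset X) (f : X → ℝ)
    (ℓ : ℝ → ℝ) (hℓ : Antitone ℓ)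
    (α β : ℝ) (hα : α ∈ Set.Ico (0 : ℝ) 1) (hβ : β ∈ Set.Ico (0 : ℝ) 1)
    -- `X_A⁺` : the `⌊(1−β)·|X_A|⌋` top-scored elements of `X_A`
    (XAp : Finset X) (hXAp_sub : XAp ⊆ XA)
    (hXAp_card : XAp.card = ⌊(1 - β) * (XA.card : ℝ)⌋₊)
    (hXAp_top : ∀ x ∈ XAp, ∀ y ∈ XA \ XAp, f y ≤ f x)
    -- `X_B⁻` : the `⌊(1−α)·|X_B|⌋` bottom-scored elements of `X_B`
    (XBm : Finset X) (hXBm_sub : XBm ⊆ XB)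
    (hXBm_card : XBm.card = ⌊(1 - α) * (XB.card : ℝ)⌋₊)
    (hXBm_bot : ∀ x ∈ XBm, ∀ y ∈ XB \ XBm, f x ≤ f y) :
    -- (1) `X_A⁺` minimizes the total instance loss among same-size subsets of `X_A`
    (∀ S ⊆ XA, S.card = ⌊(1 - β) * (XA.card : ℝ)⌋₊ →
        ∑ x ∈ XAp, instanceLossA ℓ f XB x ≤ ∑ x ∈ S, instanceLossA ℓ f XB x) ∧
    -- (2) `X_B⁻` minimizes the total instance loss among same-size subsets of `X_B`
    (∀ S' ⊆ XB, S'.card = ⌊(1 - α) * (XB.card : ℝ)⌋₊ →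
        ∑ x' ∈ XBm, instanceLossB ℓ f XA x' ≤ ∑ x' ∈ S', instanceLossB ℓ f XA x') ∧
    -- (3) the rpAUC risk equals the pairwise AUC risk after removing a set of
    -- `⌈β|X_A|⌉` instances of maximal total instance loss from `X_A` and a set of
    -- `⌈α|X_B|⌉` instances of maximal total instance loss from `X_B`
    (∃ DA ⊆ XA, ∃ DB ⊆ XB,
        DA.card = ⌈β * (XA.card : ℝ)⌉₊ ∧
        (∀ D ⊆ XA, D.card = ⌈β * (XA.card : ℝ)⌉₊ →
          ∑ x ∈ D, instanceLossA ℓ f XB x ≤ ∑ x ∈ DA, instanceLossA ℓ f XB x) ∧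
        DB.card = ⌈α * (XB.card : ℝ)⌉₊ ∧
        (∀ D' ⊆ XB, D'.card = ⌈α * (XB.card : ℝ)⌉₊ →
          ∑ x' ∈ D', instanceLossB ℓ f XA x' ≤ ∑ x' ∈ DB, instanceLossB ℓ f XA x') ∧
        pairAUCRisk ℓ f XAp XBm = pairAUCRisk ℓ f (XA \ DA) (XB \ DB)) := by
  have hminA : ∀ x ∈ XAp, ∀ y ∈ XA \ XAp, instanceLossA ℓ f XB x ≤ instanceLossA ℓ f XB y :=
    fun x hx y hy => instanceLossA_le_of_le hℓ XB (hXAp_top x hx y hy)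
  have hminB : ∀ x ∈ XBm, ∀ y ∈ XB \ XBm, instanceLossB ℓ f XA x ≤ instanceLossB ℓ f XA y :=
    fun x hx y hy => instanceLossB_le_of_le hℓ XA (hXBm_bot x hx y hy)
  have hcardA : (XA \ XAp).card = ⌈β * (XA.card : ℝ)⌉₊ := by
    rw [Finset.card_sdiff_of_subset hXAp_sub, hXAp_card, Nat.sub_floor_one_sub_mul _ hβ.1 hβ.2.le]
  have hcardB : (XB \ XBm).card = ⌈α * (XB.card : ℝ)⌉₊ := by
    rw [Finset.card_sdiff_of_subset hXBm_sub, hXBm_card, Nat.sub_floor_one_sub_mul _ hα.1 hα.2.le]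
  refine ⟨fun S hS hcard => Finset.sum_le_sum_of_forall_le_sdiff hS
      (hXAp_card.trans hcard.symm) hminA,
    fun S hS hcard => Finset.sum_le_sum_of_forall_le_sdiff hS
      (hXBm_card.trans hcard.symm) hminB,
    XA \ XAp, Finset.sdiff_subset, XB \ XBm, Finset.sdiff_subset, hcardA,
    fun D hD hcard => Finset.sum_le_sum_sdiff_of_forall_le_sdiff hXAp_sub hD
      (hcard.trans hcardA.symm) hminA,
    hcardB,
    fun D hD hcard => Finset.sum_le_sum_sdiff_of_forall_le_sdiff hXBm_sub hD
      (hcard.trans hcardB.symm) hminB, ?_⟩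
  rw [Finset.sdiff_sdiff_eq_self hXAp_sub, Finset.sdiff_sdiff_eq_self hXBm_sub]

/-- rpAUC risk equals the trimmed AUC risk; small-loss equivalence:
the top-score subset `X_A⁺` (of size `⌊(1−β)|X_A|⌋`) minimizes the total instance loss
among subsets of `X_A` of that size, the bottom-score subset `X_B⁻` (of size
`⌊(1−α)|X_B|⌋`) minimizes the total instance loss among subsets of `X_B` of that size,
and the empirical rpAUC risk computed on `(X_A⁺, X_B⁻)` equals the full empirical
pairwise AUC risk computed after removing from `X_A` a set of `⌈β|X_A|⌉`-many instances
of maximal total instance loss and from `X_B` a set of `⌈α|X_B|⌉`-many instances of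
maximal total instance loss. -/
theorem rpauc_eq_trimmed_auc {X : Type*} [DecidableEq X]
    (XA XB : Finset X) (hA : XA.Nonempty) (hB : XB.Nonempty)
    (f : X → ℝ) (hfA : Set.InjOn f ↑XA) (hfB : Set.InjOn f ↑XB)
    (ℓ : ℝ → ℝ) (hℓ : Antitone ℓ)
    (α β : ℝ) (hα : α ∈ Set.Ico (0 : ℝ) 1) (hβ : β ∈ Set.Ico (0 : ℝ) 1)
    -- `X_A⁺` : the `⌊(1−β)·|X_A|⌋` top-scored elements of `X_A`
    (XAp : Finset X) (hXAp_sub : XAp ⊆ XA)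
    (hXAp_card : XAp.card = ⌊(1 - β) * (XA.card : ℝ)⌋₊)
    (hXAp_top : ∀ x ∈ XAp, ∀ y ∈ XA \ XAp, f y ≤ f x)
    -- `X_B⁻` : the `⌊(1−α)·|X_B|⌋` bottom-scored elements of `X_B`
    (XBm : Finset X) (hXBm_sub : XBm ⊆ XB)
    (hXBm_card : XBm.card = ⌊(1 - α) * (XB.card : ℝ)⌋₊)
    (hXBm_bot : ∀ x ∈ XBm, ∀ y ∈ XB \ XBm, f x ≤ f y) :
    -- (1) `X_A⁺` minimizes the total instance loss among same-size subsets of `X_A`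
    (∀ S ⊆ XA, S.card = ⌊(1 - β) * (XA.card : ℝ)⌋₊ →
        ∑ x ∈ XAp, instanceLossA ℓ f XB x ≤ ∑ x ∈ S, instanceLossA ℓ f XB x) ∧
    -- (2) `X_B⁻` minimizes the total instance loss among same-size subsets of `X_B`
    (∀ S' ⊆ XB, S'.card = ⌊(1 - α) * (XB.card : ℝ)⌋₊ →
        ∑ x' ∈ XBm, instanceLossB ℓ f XA x' ≤ ∑ x' ∈ S', instanceLossB ℓ f XA x') ∧
    -- (3) the rpAUC risk equals the pairwise AUC risk after removing a set of
    -- `⌈β|X_A|⌉` instances of maximal total instance loss from `X_A` and a set of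
    -- `⌈α|X_B|⌉` instances of maximal total instance loss from `X_B`
    (∃ DA ⊆ XA, ∃ DB ⊆ XB,
        DA.card = ⌈β * (XA.card : ℝ)⌉₊ ∧
        (∀ D ⊆ XA, D.card = ⌈β * (XA.card : ℝ)⌉₊ →
          ∑ x ∈ D, instanceLossA ℓ f XB x ≤ ∑ x ∈ DA, instanceLossA ℓ f XB x) ∧
        DB.card = ⌈α * (XB.card : ℝ)⌉₊ ∧
        (∀ D' ⊆ XB, D'.card = ⌈α * (XB.card : ℝ)⌉₊ →
          ∑ x' ∈ D', instanceLossB ℓ f XA x' ≤ ∑ x' ∈ DB, instanceLossB ℓ f XA x') ∧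
        pairAUCRisk ℓ f XAp XBm = pairAUCRisk ℓ f (XA \ DA) (XB \ DB)) :=
  rpauc_eq_trimmed_auc_general XA XB f ℓ hℓ α β hα hβ XAp hXAp_sub hXAp_card hXAp_top XBm hXBm_sub
    hXBm_card hXBm_bot
end
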